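/- Let r ≥ 3 and t, m be positive integers with m ≥ C(t−1, r) + C(t−2, r−1) + 1. If G is an r-uniform hypergraph on t vertices with m edges containing the complete r-graph on [t−1], then G is dense. -/

import Mathlib

structure UHypergraph (r : ℕ) where
  verts : Finset ℕ
  edges : Finset (Finset ℕ)
  edge_sub : ∀ e ∈ edges, e ⊆ verts
  edge_card : ∀ e ∈ edges, e.card = r

namespace UHypergraph

variable {r : ℕ}

/-- The polynomial value `λ(E, x) = Σ_{e ∈ E} Π_{i ∈ e} x_i`. -/
def polyValue (E : Finset (Finset ℕ)) (x : ℕ → ℝ) : ℝ :=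
  ∑ e ∈ E, ∏ i ∈ e, x i

/-- A legal weighting: nonnegative, supported on the vertex set, summing to 1. -/
def LegalWeighting (G : UHypergraph r) (x : ℕ → ℝ) : Prop :=
  (∀ i, 0 ≤ x i) ∧ (∀ i ∉ G.verts, x i = 0) ∧ ∑ i ∈ G.verts, x i = 1

/-- The Lagrangian of a hypergraph. -/
noncomputable def lagrangian (G : UHypergraph r) : ℝ :=
  sSup {l : ℝ | ∃ x, G.LegalWeighting x ∧ l = polyValue G.edges x}

/-- An optimum weighting attains the Lagrangian. -/
def IsOptimal (G : UHypergraph r) (x : ℕ → ℝ) : Prop :=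
  G.LegalWeighting x ∧ polyValue G.edges x = G.lagrangian

def IsSubgraph (H G : UHypergraph r) : Prop :=
  H.verts ⊆ G.verts ∧ H.edges ⊆ G.edges

def IsProperSubgraph (H G : UHypergraph r) : Prop :=
  H.IsSubgraph G ∧ (H.verts ≠ G.verts ∨ H.edges ≠ G.edges)

/-- A hypergraph is dense if every proper subgraph has strictly smaller Lagrangian. -/
def Dense (G : UHypergraph r) : Prop :=
  ∀ H : UHypergraph r, H.IsProperSubgraph G → H.lagrangian < G.lagrangian

/-- The link `E_i` of a vertex `i`. -/
def link (G : UHypergraph r) (i : ℕ) : Finset (Finset ℕ) :=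
  (G.edges.filter fun e => i ∈ e).image fun e => e.erase i

/-- The pair link `E_{ij}`. -/
def pairLink (G : UHypergraph r) (i j : ℕ) : Finset (Finset ℕ) :=
  (G.edges.filter fun e => i ∈ e ∧ j ∈ e).image fun e => (e.erase i).erase j

/-- `E_{i \ j} = E_i ∩ E_j^c`. -/
def linkDiff (G : UHypergraph r) (i j : ℕ) : Finset (Finset ℕ) :=
  (G.link i).filter fun A => j ∉ A ∧ insert j A ∉ G.edges

/-- `G` contains a clique of order `t`. -/
def HasClique (G : UHypergraph r) (t : ℕ) : Prop :=
  ∃ S ⊆ G.verts, S.card = t ∧ S.powersetCard r ⊆ G.edges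

/-- `G` is left-compressed: replacing a vertex of an edge by a smaller vertex
not in the edge yields an edge. -/
def LeftCompressed (G : UHypergraph r) : Prop :=
  ∀ e ∈ G.edges, ∀ i j : ℕ, i ∈ G.verts → i < j → j ∈ e → i ∉ e →
    insert i (e.erase j) ∈ G.edges

/-- The subgraph induced on a vertex set `S`. -/
def induce (G : UHypergraph r) (S : Finset ℕ) : UHypergraph r :=
  ⟨G.verts ∩ S, G.edges.filter fun e => e ⊆ S,
   fun e he => Finset.subset_inter (G.edge_sub e (Finset.mem_filter.mp he).1)
     (Finset.mem_filter.mp he).2,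
   fun e he => G.edge_card e (Finset.mem_filter.mp he).1⟩

end UHypergraph

/-- The complete `r`-graph on vertex set `{1, …, t}`. -/
def completeHG (t r : ℕ) : UHypergraph r :=
  ⟨Finset.Icc 1 t, (Finset.Icc 1 t).powersetCard r,
   fun _ he => (Finset.mem_powersetCard.mp he).1,
   fun _ he => (Finset.mem_powersetCard.mp he).2⟩

/-- `H₁ = [t-1]^{(3)} \ {(t-3)(t-2)(t-1)}`. -/
def H1 (t : ℕ) : UHypergraph 3 :=
  ⟨Finset.Icc 1 (t-1), (completeHG (t-1) 3).edges.erase {t-3, t-2, t-1},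
   fun e he => (completeHG (t-1) 3).edge_sub e (Finset.mem_of_mem_erase he),
   fun e he => (completeHG (t-1) 3).edge_card e (Finset.mem_of_mem_erase he)⟩

/-!
Write `N = t - 1`. By Maclaurin's inequality, a weighting of total mass `1` on `N` vertices gives
the complete `r`-graph the value at most `C(N,r)/N^r`. Conversely, putting a small weight `ε` on
the vertex `t` and spreading `1 - ε` evenly over `[N]`, the value of `G` has derivative
`(L - C(N-1,r-1))/N^(r-1)` at `ε = 0`, where `L > C(N-1,r-1)` is the number of edges through `t`;
hence `λ(G) > C(N,r)/N^r`.

Let `H` be a proper subgraph and `x` an optimal weighting of `H` (it exists by compactness of the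
simplex). Every vertex of `G` lies in an edge, so `H` misses an edge `e` of `G`. If `x` is positive
on `e`, then `λ(H) = λ(H, x) < λ(G, x) ≤ λ(G)`. Otherwise `x` vanishes at a vertex `u`, so
`λ(H, x)` is at most the value of the complete `r`-graph on the other `N` vertices, and
`λ(H) ≤ C(N,r)/N^r < λ(G)`.
-/

open Finset

/-- Maclaurin's inequality for `(a, b, …, b)` with `n` copies of `b`, from Bernoulli's inequality
at `b`. -/
theorem choose_mul_pow_add_le (n k : ℕ) {a b : ℝ} (ha : 0 ≤ a) (hb : 0 ≤ b) :
    n.choose (k + 1) * b ^ (k + 1) + a * (n.choose k * b ^ k)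
      ≤ (n + 1).choose (k + 1) * ((a + n * b) / (n + 1)) ^ (k + 1) := by
  have hμ : (n + 1 : ℝ) * ((a + n * b) / (n + 1) - b) = a - b := by field_simp; ring
  have hμ0 : 0 ≤ (a + n * b) / (n + 1) := by positivity
  generalize (a + n * b) / (n + 1) = μ at hμ hμ0
  have hpascal : ((n + 1).choose (k + 1) : ℝ) = n.choose k + n.choose (k + 1) := by
    rw [Nat.choose_succ_succ]; push_cast; ring
  have habsorb : ((n + 1).choose (k + 1) : ℝ) * (k + 1) = (n + 1) * n.choose k := by
    exact_mod_cast (Nat.add_one_mul_choose_eq n k).symm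
  have hbernoulli : b ^ (k + 1) + (k + 1 : ℕ) * b ^ k * (μ - b) ≤ μ ^ (k + 1) := by
    simpa using pow_add_mul_le_add_pow hb (by linarith : 0 ≤ 2 * b + (μ - b)) (k + 1)
  calc _ = ((n + 1).choose (k + 1) : ℝ) * (b ^ (k + 1) + (k + 1 : ℕ) * b ^ k * (μ - b)) := by
        push_cast
        linear_combination (-b ^ (k + 1)) * hpascal - b ^ k * (μ - b) * habsorb
          - b ^ k * (n.choose k) * hμ
    _ ≤ _ := by gcongr

theorem sum_powersetCard_succ_insert_prod {ι R : Type*} [DecidableEq ι] [CommSemiring R]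
    {a : ι} {S : Finset ι} (haS : a ∉ S) (k : ℕ) (x : ι → R) :
    ∑ A ∈ (insert a S).powersetCard (k + 1), ∏ i ∈ A, x i
      = ∑ A ∈ S.powersetCard (k + 1), ∏ i ∈ A, x i
        + x a * ∑ A ∈ S.powersetCard k, ∏ i ∈ A, x i := by
  have hnotMem : ∀ A ∈ S.powersetCard k, a ∉ A := fun A hA haA =>
    haS ((mem_powersetCard.mp hA).1 haA)
  have hdisj : Disjoint (S.powersetCard (k + 1)) ((S.powersetCard k).image (insert a)) := by
    simp only [disjoint_left, mem_image, not_exists, not_and]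
    rintro _ hA B - rfl
    exact haS ((mem_powersetCard.mp hA).1 (mem_insert_self a B))
  rw [powersetCard_succ_insert haS, sum_union hdisj, sum_image, mul_sum]
  · exact congrArg _ (sum_congr rfl fun A hA => prod_insert (hnotMem A hA))
  · intro A hA B hB hAB
    rw [← erase_insert (hnotMem A hA), ← erase_insert (hnotMem B hB), hAB]

/-- Maclaurin's inequality. -/
theorem sum_powersetCard_prod_le_choose_mul_avg_pow {ι : Type*} [DecidableEq ι] (S : Finset ι)
    {x : ι → ℝ} (hx : ∀ i ∈ S, 0 ≤ x i) (r : ℕ) :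
    ∑ A ∈ S.powersetCard r, ∏ i ∈ A, x i ≤ (#S).choose r * ((∑ i ∈ S, x i) / #S) ^ r := by
  induction S using Finset.induction_on generalizing r with
  | empty =>
    cases r with
    | zero => simp
    | succ k => rw [powersetCard_eq_empty.mpr (by simp)]; simp
  | insert a S haS ih =>
    rw [forall_mem_insert] at hx
    cases r with
    | zero => simp
    | succ k =>
      set b := (∑ i ∈ S, x i) / #S
      have hb : 0 ≤ b := div_nonneg (sum_nonneg hx.2) (Nat.cast_nonneg _)
      have hsum : ∑ i ∈ S, x i = #S * b := by
        rcases S.eq_empty_or_nonempty with rfl | hS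
        · simp
        · rw [mul_div_cancel₀ _ (by positivity)]
      rw [sum_powersetCard_succ_insert_prod haS, card_insert_of_notMem haS, sum_insert haS, hsum]
      push_cast
      calc _ ≤ (#S).choose (k + 1) * b ^ (k + 1) + x a * ((#S).choose k * b ^ k) := by
            gcongr
            · exact ih hx.2 (k + 1)
            · exact hx.1
            · exact ih hx.2 k
        _ ≤ _ := choose_mul_pow_add_le _ _ hx.1 hb

theorem filter_notMem_subset_powersetCard_erase {E : Finset (Finset ℕ)} {V : Finset ℕ} {r : ℕ}
    (hE : E ⊆ V.powersetCard r) (u : ℕ) : {e ∈ E | u ∉ e} ⊆ (V.erase u).powersetCard r := by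
  intro e he
  rw [mem_filter] at he
  obtain ⟨hsub, hcard⟩ := mem_powersetCard.mp (hE he.1)
  exact mem_powersetCard.mpr ⟨fun i hi => mem_erase.mpr ⟨ne_of_mem_of_not_mem hi he.2, hsub hi⟩, hcard⟩

theorem exists_choose_div_pow_lt (N r L : ℕ) (hN : 0 < N) (hr : 0 < r)
    (hL : (N - 1).choose (r - 1) < L) :
    ∃ ε : ℝ, 0 ≤ ε ∧ ε ≤ 1 ∧ (N.choose r : ℝ) / N ^ r
      < N.choose r * ((1 - ε) / N) ^ r + L * (ε * ((1 - ε) / N) ^ (r - 1)) := by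
  obtain ⟨k, rfl⟩ : ∃ k, r = k + 1 := ⟨r - 1, by omega⟩
  rw [Nat.add_sub_cancel] at hL ⊢
  set C : ℝ := ↑(N.choose (k + 1))
  set D : ℝ := ↑((N - 1).choose k)
  have hrel : (k + 1) * C = N * D := by
    have := Nat.add_one_mul_choose_eq (N - 1) k
    rw [Nat.sub_add_cancel hN] at this
    simp only [C, D]; exact_mod_cast (mul_comm _ _).trans this.symm
  have hLD : D + 1 ≤ L := by simp only [D]; exact_mod_cast hL
  have hD : 0 ≤ D := Nat.cast_nonneg _
  obtain ⟨ε, hε0, hε⟩ : ∃ ε : ℝ, 0 < ε ∧ (k + 1) * (D + 1) * ε = 1 :=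
    ⟨1 / ((k + 1) * (D + 1)), by positivity, by field_simp⟩
  have hε1 : ε ≤ 1 := by nlinarith [mul_nonneg (mul_nonneg k.cast_nonneg hD) hε0.le]
  refine ⟨ε, hε0.le, hε1, ?_⟩
  have hbern₁ : 1 - (k + 1) * ε ≤ (1 - ε) ^ (k + 1) := by
    simpa [sub_eq_add_neg] using one_add_mul_le_pow (by linarith : (-2 : ℝ) ≤ -ε) (k + 1)
  have hbern₂ : 1 - k * ε ≤ (1 - ε) ^ k := by
    simpa [sub_eq_add_neg] using one_add_mul_le_pow (by linarith : (-2 : ℝ) ≤ -ε) k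
  have hgain : C < C * (1 - ε) ^ (k + 1) + L * ε * N * (1 - ε) ^ k := by
    have h1 : C * (1 - (k + 1) * ε) ≤ C * (1 - ε) ^ (k + 1) := by gcongr
    have h2 : (D + 1) * ε * N * (1 - k * ε) ≤ L * ε * N * (1 - ε) ^ k := by
      gcongr
      nlinarith [mul_nonneg (mul_nonneg k.cast_nonneg hD) hε0.le]
    have h3 : C * (1 - (k + 1) * ε) + (D + 1) * ε * N * (1 - k * ε)
        = C + N * (D + 1) * ε ^ 2 := by
      linear_combination (-ε) * hrel - (N * ε) * hε
    nlinarith [show 0 < N * (D + 1) * ε ^ 2 by positivity]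
  calc (C : ℝ) / N ^ (k + 1) < (C * (1 - ε) ^ (k + 1) + L * ε * N * (1 - ε) ^ k) / N ^ (k + 1) := by
        gcongr
    _ = _ := by rw [div_pow, div_pow]; field_simp; ring

namespace UHypergraph

variable {r : ℕ}

theorem edges_subset_powersetCard (G : UHypergraph r) : G.edges ⊆ G.verts.powersetCard r :=
  fun e he => mem_powersetCard.mpr ⟨G.edge_sub e he, G.edge_card e he⟩

theorem card_filter_notMem_edges_le (G : UHypergraph r) {v : ℕ} (hv : v ∈ G.verts) :
    #{e ∈ G.edges | v ∉ e} ≤ (#G.verts - 1).choose r := by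
  calc #{e ∈ G.edges | v ∉ e} ≤ #((G.verts.erase v).powersetCard r) :=
        card_le_card (filter_notMem_subset_powersetCard_erase G.edges_subset_powersetCard v)
    _ = (#G.verts - 1).choose r := by rw [card_powersetCard, card_erase_of_mem hv]

theorem exists_mem_edge_of_choose_lt_card (G : UHypergraph r) {v : ℕ} (hv : v ∈ G.verts)
    (hcard : (#G.verts - 1).choose r < #G.edges) : ∃ e ∈ G.edges, v ∈ e := by
  by_contra! h
  rw [← filter_true_of_mem h] at hcard
  exact (G.card_filter_notMem_edges_le hv).not_gt hcard

theorem LegalWeighting.nonneg {G : UHypergraph r} {x : ℕ → ℝ} (hx : G.LegalWeighting x) (i : ℕ) :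
    0 ≤ x i := hx.1 i

theorem LegalWeighting.le_one {G : UHypergraph r} {x : ℕ → ℝ} (hx : G.LegalWeighting x) (i : ℕ) :
    x i ≤ 1 := by
  by_cases hi : i ∈ G.verts
  · exact hx.2.2 ▸ single_le_sum (fun j _ => hx.1 j) hi
  · exact (hx.2.1 i hi).trans_le zero_le_one

theorem LegalWeighting.mono {H G : UHypergraph r} (hHG : H.verts ⊆ G.verts) {x : ℕ → ℝ}
    (hx : H.LegalWeighting x) : G.LegalWeighting x :=
  ⟨hx.1, fun i hi => hx.2.1 i fun h => hi (hHG h),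
    (sum_subset hHG fun i _ hi => hx.2.1 i hi) ▸ hx.2.2⟩

theorem bddAbove_lagrangian (G : UHypergraph r) :
    BddAbove {l : ℝ | ∃ x, G.LegalWeighting x ∧ l = polyValue G.edges x} := by
  refine ⟨#G.edges, ?_⟩
  rintro _ ⟨x, hx, rfl⟩
  calc polyValue G.edges x ≤ ∑ _e ∈ G.edges, (1 : ℝ) :=
        sum_le_sum fun e _ => prod_le_one (fun i _ => hx.nonneg i) fun i _ => hx.le_one i
    _ = #G.edges := by simp

theorem polyValue_le_lagrangian (G : UHypergraph r) {x : ℕ → ℝ} (hx : G.LegalWeighting x) :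
    polyValue G.edges x ≤ G.lagrangian :=
  le_csSup G.bddAbove_lagrangian ⟨x, hx, rfl⟩

theorem lagrangian_eq_zero_of_verts_eq_empty (G : UHypergraph r) (hG : G.verts = ∅) :
    G.lagrangian = 0 := by
  simp [lagrangian, LegalWeighting, hG]

theorem isClosed_setOf_legalWeighting (G : UHypergraph r) :
    IsClosed {x : ℕ → ℝ | G.LegalWeighting x} := by
  simp only [LegalWeighting, Set.ofPred_and, Set.ofPred_forall]
  refine IsClosed.inter ?_ (IsClosed.inter ?_ ?_)
  · exact isClosed_iInter fun i => isClosed_le continuous_const (continuous_apply i)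
  · exact isClosed_iInter fun i => isClosed_iInter fun _ =>
      isClosed_eq (continuous_apply i) continuous_const
  · exact isClosed_eq (continuous_finsetSum _ fun i _ => continuous_apply i) continuous_const

theorem isCompact_setOf_legalWeighting (G : UHypergraph r) :
    IsCompact {x : ℕ → ℝ | G.LegalWeighting x} :=
  (isCompact_univ_pi fun _ => isCompact_Icc).of_isClosed_subset G.isClosed_setOf_legalWeighting
    fun _ hx => Set.mem_univ_pi.mpr fun i => ⟨hx.nonneg i, hx.le_one i⟩

theorem continuous_polyValue (E : Finset (Finset ℕ)) : Continuous (polyValue E) :=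
  continuous_finsetSum _ fun _ _ => continuous_finsetProd _ fun i _ => continuous_apply i

theorem exists_isOptimal (G : UHypergraph r) (hG : G.verts.Nonempty) : ∃ x, G.IsOptimal x := by
  obtain ⟨v, hv⟩ := hG
  have hlegal : G.LegalWeighting (Pi.single v 1) := by
    refine ⟨fun i => ?_, fun i hi => Pi.single_eq_of_ne (ne_of_mem_of_not_mem hv hi).symm _, ?_⟩
    · by_cases h : i = v <;> simp [h]
    · simp [Pi.single_apply, hv]
  obtain ⟨x, hx, hmax⟩ := G.isCompact_setOf_legalWeighting.exists_isMaxOn ⟨_, hlegal⟩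
    (continuous_polyValue G.edges).continuousOn
  exact ⟨x, hx, (G.polyValue_le_lagrangian hx).antisymm
    (csSup_le ⟨_, _, hlegal, rfl⟩ fun _ ⟨y, hy, hl⟩ => hl ▸ hmax hy)⟩

theorem polyValue_mono {E F : Finset (Finset ℕ)} (hEF : E ⊆ F) {x : ℕ → ℝ} (hx : ∀ i, 0 ≤ x i) :
    polyValue E x ≤ polyValue F x :=
  sum_le_sum_of_subset_of_nonneg hEF fun _ _ _ => prod_nonneg fun i _ => hx i

theorem polyValue_le_polyValue_powersetCard_erase {E : Finset (Finset ℕ)} {V : Finset ℕ}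
    (hE : E ⊆ V.powersetCard r) {x : ℕ → ℝ} (hx : ∀ i, 0 ≤ x i) {u : ℕ} (hu : x u = 0) :
    polyValue E x ≤ polyValue ((V.erase u).powersetCard r) x := by
  rw [polyValue, ← sum_filter_of_ne (p := (u ∉ ·)) fun e _ h hue => h (prod_eq_zero hue hu)]
  exact polyValue_mono (filter_notMem_subset_powersetCard_erase hE u) hx

theorem dense_of_choose_div_pow_lt_lagrangian (G : UHypergraph r)
    (hcover : ∀ v ∈ G.verts, ∃ e ∈ G.edges, v ∈ e)
    (hlt : ((#G.verts - 1).choose r : ℝ) / (#G.verts - 1 : ℕ) ^ r < G.lagrangian) :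
    G.Dense := by
  rintro H ⟨⟨hV, hE⟩, hne⟩
  obtain ⟨e₀, he₀G, he₀H⟩ : ∃ e ∈ G.edges, e ∉ H.edges := by
    by_contra! hGH
    have hEeq : H.edges = G.edges := hE.antisymm hGH
    refine hne.elim (fun h => h (hV.antisymm fun v hv => ?_)) (· hEeq)
    obtain ⟨e, he, hve⟩ := hcover v hv
    exact H.edge_sub e (hEeq ▸ he) hve
  rcases H.verts.eq_empty_or_nonempty with hH | hH
  · rw [H.lagrangian_eq_zero_of_verts_eq_empty hH]
    exact hlt.trans_le' (by positivity)
  obtain ⟨x, hx, hxH⟩ := H.exists_isOptimal hH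
  have hxG := hx.mono hV
  rw [← hxH]
  by_cases hzero : ∃ u ∈ e₀, x u = 0
  · obtain ⟨u, hu, hxu⟩ := hzero
    have huG : u ∈ G.verts := G.edge_sub e₀ he₀G hu
    calc polyValue H.edges x ≤ polyValue ((G.verts.erase u).powersetCard r) x :=
          polyValue_le_polyValue_powersetCard_erase
            (H.edges_subset_powersetCard.trans (powersetCard_mono hV)) hx.nonneg hxu
      _ ≤ ((#G.verts - 1).choose r : ℝ) / (#G.verts - 1 : ℕ) ^ r := by
          have := sum_powersetCard_prod_le_choose_mul_avg_pow (G.verts.erase u)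
            (fun i _ => hx.nonneg i) r
          rwa [sum_erase _ hxu, hxG.2.2, card_erase_of_mem huG, div_pow, one_pow,
            ← div_eq_mul_one_div] at this
      _ < G.lagrangian := hlt
  · have hpos : 0 < ∏ i ∈ e₀, x i :=
      prod_pos fun i hi => (hx.nonneg i).lt_of_ne' fun h => hzero ⟨i, hi, h⟩
    calc polyValue H.edges x < polyValue G.edges x :=
          sum_lt_sum_of_subset hE he₀G he₀H hpos fun e _ _ => prod_nonneg fun i _ => hx.nonneg i
      _ ≤ G.lagrangian := G.polyValue_le_lagrangian hxG

theorem choose_div_pow_lt_lagrangian (G : UHypergraph r) (hr : 0 < r) {v : ℕ} {S : Finset ℕ}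
    (hvS : v ∉ S) (hS : S.Nonempty) (hverts : G.verts = insert v S)
    (hclique : S.powersetCard r ⊆ G.edges)
    (hlink : (#S - 1).choose (r - 1) < #{e ∈ G.edges | v ∈ e}) :
    ((#S).choose r : ℝ) / #S ^ r < G.lagrangian := by
  obtain ⟨ε, hε0, hε1, hlt⟩ := exists_choose_div_pow_lt #S r _ hS.card_pos hr hlink
  set q : ℝ := (1 - ε) / #S
  set w : ℕ → ℝ := fun i => if i = v then ε else if i ∈ S then q else 0
  have hwv : w v = ε := if_pos rfl
  have hwS : ∀ i ∈ S, w i = q := fun i hi => by simp [w, hi, ne_of_mem_of_not_mem hi hvS]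
  have hw : G.LegalWeighting w := by
    refine ⟨fun i => ?_, fun i hi => ?_, ?_⟩
    · have : 0 ≤ q := div_nonneg (by linarith) (Nat.cast_nonneg _)
      simp only [w]; split_ifs <;> first | assumption | exact le_rfl
    · rw [hverts, mem_insert, not_or] at hi
      simp [w, hi.1, hi.2]
    · rw [hverts, sum_insert hvS, sum_congr rfl hwS, sum_const, nsmul_eq_mul, hwv]
      rw [mul_div_cancel₀ _ (Nat.cast_ne_zero.mpr hS.card_pos.ne')]
      ring
  have hclique_val : polyValue (S.powersetCard r) w = (#S).choose r * q ^ r := by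
    rw [polyValue, sum_eq_card_nsmul fun A hA => ?_, card_powersetCard, nsmul_eq_mul]
    obtain ⟨hAS, hAr⟩ := mem_powersetCard.mp hA
    rw [prod_eq_pow_card fun i hi => hwS i (hAS hi), hAr]
  have hlink_val :
      polyValue {e ∈ G.edges | v ∈ e} w = #{e ∈ G.edges | v ∈ e} * (ε * q ^ (r - 1)) := by
    rw [polyValue, sum_eq_card_nsmul fun e he => ?_, nsmul_eq_mul]
    obtain ⟨heG, hve⟩ := mem_filter.mp he
    have herase : e.erase v ⊆ S := fun i hi => by
      have := hverts ▸ G.edge_sub e heG (mem_of_mem_erase hi)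
      exact (mem_insert.mp this).resolve_left (ne_of_mem_erase hi)
    rw [← mul_prod_erase e w hve, hwv, prod_eq_pow_card fun i hi => hwS i (herase hi),
      card_erase_of_mem hve, G.edge_card e heG]
  have hdisj : Disjoint (S.powersetCard r) {e ∈ G.edges | v ∈ e} :=
    disjoint_left.mpr fun A hA hvA => hvS ((mem_powersetCard.mp hA).1 (mem_filter.mp hvA).2)
  calc ((#S).choose r : ℝ) / #S ^ r
      < polyValue (S.powersetCard r) w + polyValue {e ∈ G.edges | v ∈ e} w := by
        rw [hclique_val, hlink_val]; exact hlt
    _ = polyValue (S.powersetCard r ∪ {e ∈ G.edges | v ∈ e}) w := (sum_union hdisj).symm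
    _ ≤ polyValue G.edges w := polyValue_mono (union_subset hclique (filter_subset _ _)) hw.nonneg
    _ ≤ G.lagrangian := G.polyValue_le_lagrangian hw

end UHypergraph

theorem dense_of_contains_clique_general {r t m : ℕ} (hr : 3 ≤ r)
    (hm : (t - 1).choose r + (t - 2).choose (r - 1) + 1 ≤ m)
    (G : UHypergraph r) (hv : G.verts = Finset.Icc 1 t) (he : G.edges.card = m)
    (hsub : (completeHG (t - 1) r).edges ⊆ G.edges) : G.Dense := by
  have hcard : #G.verts = t := by simp [hv]
  have hrt : r ≤ t := by
    by_contra! h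
    have := card_le_card G.edges_subset_powersetCard
    rw [card_powersetCard, hcard, Nat.choose_eq_zero_of_lt h] at this
    omega
  set S := Finset.Icc 1 (t - 1)
  have hS : #S = t - 1 := by simp [S]
  have hverts : G.verts = insert t S := by
    rw [hv]; ext i; simp only [S, mem_insert, mem_Icc]; omega
  have htS : t ∉ S := by simp [S]; omega
  have hlink : (t - 2).choose (r - 1) < #{e ∈ G.edges | t ∈ e} := by
    have hnot := G.card_filter_notMem_edges_le (hverts ▸ mem_insert_self t S)
    have hsplit := card_filter_add_card_filter_not (s := G.edges) (t ∈ ·)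
    rw [hcard] at hnot
    omega
  refine G.dense_of_choose_div_pow_lt_lagrangian
    (fun v hv => G.exists_mem_edge_of_choose_lt_card hv (by rw [hcard]; omega)) ?_
  have := G.choose_div_pow_lt_lagrangian (by omega) htS ⟨1, by simp [S]; omega⟩ hverts hsub
    (by rw [hS]; exact hlink)
  rwa [hS, ← hcard] at this

/-- If `r ≥ 3`, `m ≥ C(t-1,r) + C(t-2,r-1) + 1`, and `G` is an `r`-graph on `[t]`
with `m` edges containing the complete `r`-graph on `[t-1]`, then `G` is dense. -/
theorem dense_of_contains_clique {r t m : ℕ} (hr : 3 ≤ r) (ht : 0 < t)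
    (hm : (t - 1).choose r + (t - 2).choose (r - 1) + 1 ≤ m)
    (G : UHypergraph r) (hv : G.verts = Finset.Icc 1 t) (he : G.edges.card = m)
    (hsub : (completeHG (t - 1) r).edges ⊆ G.edges) : G.Dense :=
  dense_of_contains_clique_general hr hm G hv he hsub
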